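/- Let A = U·diag(μ)·(V·diag(ν))† with U·V† = Iₙ and suppose the products λ_k := μ_k·conj(ν_k) are pairwise distinct. Then for all indices i, j, the vector u_i ∘ v̄_j (entrywise product of the i-th row of U and the conjugate i-th row of V) equals Vandermonde(λ)⁻¹ applied to the vector ( [A⁰]_{ij}, [A¹]_{ij}, …, [A^{n−1}]_{ij} ), where Vandermonde(λ) is the matrix with (r,c)-entry λ_c^r. -/

import Mathlib

open Matrix BigOperators

/-!
Since `V†U = 1`, `A = U diag(λ) V†` is a conjugate of `diag(λ)`, so
`Aʳ = U diag(λʳ) V†` and `[Aʳ]ᵢⱼ = ∑ₖ λₖʳ Uᵢₖ conj(Vⱼₖ)`. Thus the vector of entries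
`([Aʳ]ᵢⱼ)ᵣ` is the transposed Vandermonde matrix of `λ` applied to `uᵢ ∘ v̄ⱼ`, and that
matrix is invertible because the `λₖ` are distinct.
-/

namespace Matrix

variable {m R : Type*} [Fintype m] [DecidableEq m]

theorem mul_diagonal_mul_conjTranspose_diagonal [Semiring R] [StarRing R]
    (U V : Matrix m m R) (μ ν : m → R) :
    U * diagonal μ * (V * diagonal ν)ᴴ = U * diagonal (fun k => μ k * star (ν k)) * Vᴴ := by
  rw [conjTranspose_mul, diagonal_conjTranspose, Matrix.mul_assoc, ← Matrix.mul_assoc (diagonal μ),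
    diagonal_mul_diagonal, ← Matrix.mul_assoc]
  rfl

theorem mul_diagonal_mul_apply [CommSemiring R] (U W : Matrix m m R) (d : m → R) (i j : m) :
    (U * diagonal d * W) i j = ∑ k, d k * (U i k * W k j) := by
  rw [mul_apply]
  exact Finset.sum_congr rfl fun k _ => by rw [mul_diagonal]; ring

theorem mul_diagonal_mul_pow [CommRing R] {U W : Matrix m m R} (hUW : U * W = 1)
    (d : m → R) (r : ℕ) : (U * diagonal d * W) ^ r = U * diagonal (d ^ r) * W := by
  let u : (Matrix m m R)ˣ := ⟨U, W, hUW, mul_eq_one_comm.mp hUW⟩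
  rw [← diagonal_pow]
  exact u.conj_pow (diagonal d) r

theorem vandermonde_transpose_mulVec [CommRing R] {n : ℕ} (v x : Fin n → R) :
    (vandermonde v)ᵀ *ᵥ x = fun r : Fin n => ∑ k, v k ^ (r : ℕ) * x k :=
  rfl

end Matrix

/-- If A = U·diag(μ)·(V·diag(ν))†, U·V† = Iₙ, and the products λ_k = μ_k conj(ν_k)
are pairwise distinct, then for all i, j the vector u_i ∘ v̄_j equals
Vandermonde(λ)⁻¹ applied to ([A⁰]_{ij}, …, [A^{n−1}]_{ij}), where
[Vandermonde(λ)]_{r,c} = λ_c^r. -/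
theorem stmt_4 (n : ℕ) (U V : Matrix (Fin n) (Fin n) ℂ) (μ ν : Fin n → ℂ)
    (hUV : U * Vᴴ = 1) (A : Matrix (Fin n) (Fin n) ℂ)
    (hA : A = U * Matrix.diagonal μ * (V * Matrix.diagonal ν)ᴴ)
    (l : Fin n → ℂ) (hl : ∀ k, l k = μ k * star (ν k))
    (hdist : Function.Injective l) (i j : Fin n) :
    (fun k => U i k * star (V j k))
      = (Matrix.of fun r c : Fin n => l c ^ (r : ℕ))⁻¹.mulVec
          (fun r : Fin n => (A ^ (r : ℕ)) i j) := by
  have hA : A = U * diagonal l * Vᴴ := by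
    rw [hA, mul_diagonal_mul_conjTranspose_diagonal, ← funext hl]
  have hdet : IsUnit (vandermonde l)ᵀ.det := by
    rw [det_transpose]
    exact (det_vandermonde_ne_zero_iff.mpr hdist).isUnit
  have := invertibleOfIsUnitDet _ hdet
  -- Mathlib's `vandermonde v` has entries `v r ^ c`: the matrix of the statement is its transpose.
  change _ = ((vandermonde l)ᵀ)⁻¹ *ᵥ _
  refine (inv_mulVec_eq_vec ?_).symm
  ext r
  rw [hA, mul_diagonal_mul_pow hUV, mul_diagonal_mul_apply, vandermonde_transpose_mulVec]
  rfl
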